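/- arXiv:1410.4300 — 5 statements merged into one kernel-verified Lean document; each statement's English description precedes it below -/
import Mathlib

section
/- Let f : 𝔻 → ℂ be holomorphic with f(0) = 1, Re f > 0 on 𝔻, and Taylor expansion f(z) = 1 + ∑_{n≥1} aₙ zⁿ. Then |aₙ| ≤ 2 for every n ≥ 1. -/
/-!
On a circle `|z - c| = R` inside the domain, the mean value property kills the averages of
`(z - c)ⁿ f` for `n ≥ 1`, and since `conj (z - c) = R² / (z - c)` there, also those of
`(z - c)⁻ⁿ conj f`. Adding this to Cauchy's formula `aₙ = avg ((z - c)⁻ⁿ f)` gives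
`aₙ = avg ((z - c)⁻ⁿ · 2 Re f)`, so when `Re f ≥ 0` the triangle inequality and the mean value
property for `Re f` yield `|aₙ| Rⁿ ≤ 2 Re f(c)`. For the unit disc let `R → 1`.
-/

open Complex Metric Real Set ComplexConjugate

theorem Real.norm_circleAverage_le_circleAverage_norm {E : Type*} [NormedAddCommGroup E]
    [NormedSpace ℝ E] (f : ℂ → E) (c : ℂ) (R : ℝ) :
    ‖circleAverage f c R‖ ≤ circleAverage (fun z ↦ ‖f z‖) c R := by
  rw [circleAverage, circleAverage, norm_smul, smul_eq_mul, Real.norm_of_nonneg (by positivity)]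
  gcongr
  exact intervalIntegral.norm_integral_le_integral_norm two_pi_pos.le

namespace DifferentiableOn

variable {f : ℂ → ℂ} {c : ℂ} {R : ℝ}

theorem circleAverage_inv_pow_mul_eq_coeff (hf : DifferentiableOn ℂ f (closedBall c R))
    (hR : 0 < R) (n : ℕ) :
    circleAverage (fun z ↦ ((z - c) ^ n)⁻¹ * f z) c R = iteratedDeriv n f c / n.factorial := by
  have h := hf.circleIntegral_one_div_sub_center_pow_smul hR n
  rw [circleAverage_eq_circleIntegral hR.ne']
  simp only [smul_eq_mul, one_div, ← mul_assoc, ← mul_inv, ← pow_succ'] at h ⊢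
  rw [h]
  field_simp

theorem circleAverage_pow_mul_eq_zero (hf : DifferentiableOn ℂ f (closedBall c R)) (hR : 0 < R)
    {n : ℕ} (hn : n ≠ 0) :
    circleAverage (fun z ↦ (z - c) ^ n * f z) c R = 0 := by
  have hg : DifferentiableOn ℂ (fun z ↦ (z - c) ^ n * f z) (closedBall c |R|) := by
    rw [abs_of_pos hR]; fun_prop
  rw [(hg.mono closure_ball_subset_closedBall).diffContOnCl.circleAverage]
  simp [hn]

theorem circleAverage_inv_pow_mul_conj_eq_zero (hf : DifferentiableOn ℂ f (closedBall c R))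
    (hR : 0 < R) {n : ℕ} (hn : n ≠ 0) :
    circleAverage (fun z ↦ ((z - c) ^ n)⁻¹ * conj (f z)) c R = 0 := by
  have hsphere : EqOn (fun z ↦ ((z - c) ^ n)⁻¹ * conj (f z))
      (fun z ↦ ((R : ℂ) ^ (2 * n))⁻¹ • conj ((z - c) ^ n * f z)) (sphere c |R|) := by
    intro z hz
    have hz' : ‖z - c‖ = R := by simpa [abs_of_pos hR, dist_eq_norm] using hz
    have hzc : z - c ≠ 0 := norm_ne_zero_iff.mp (hz'.trans_ne hR.ne')
    have hR' : (R : ℂ) ≠ 0 := ofReal_ne_zero.mpr hR.ne'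
    have hconj : conj (z - c) = R ^ 2 / (z - c) := by
      rw [eq_div_iff hzc, mul_comm, mul_conj, normSq_eq_norm_sq, hz']; push_cast; ring
    simp only [smul_eq_mul, map_mul, map_pow, hconj]
    rw [div_pow, ← pow_mul]
    field_simp
  have hint : CircleIntegrable (fun z ↦ (z - c) ^ n * f z) c R :=
    ((continuousOn_id.sub continuousOn_const).pow n |>.mul
      (hf.continuousOn.mono sphere_subset_closedBall)).circleIntegrable hR.le
  have h := conjCLE.toContinuousLinearMap.circleAverage_comp_comm hint
  rw [hf.circleAverage_pow_mul_eq_zero hR hn, map_zero] at h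
  simp only [ContinuousLinearEquiv.coe_coe, Function.comp_def, conjCLE_apply] at h
  rw [circleAverage_congr_sphere hsphere, circleAverage_fun_smul, h, smul_zero]

theorem circleAverage_inv_pow_mul_two_mul_re_eq_coeff (hf : DifferentiableOn ℂ f (closedBall c R))
    (hR : 0 < R) {n : ℕ} (hn : n ≠ 0) :
    circleAverage (fun z ↦ ((z - c) ^ n)⁻¹ * (2 * (f z).re : ℝ)) c R =
      iteratedDeriv n f c / n.factorial := by
  have hcont : ContinuousOn (fun z ↦ ((z - c) ^ n)⁻¹) (sphere c R) :=
    ((continuousOn_id.sub continuousOn_const).pow n).inv₀ fun z hz ↦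
      pow_ne_zero _ (sub_ne_zero.mpr (ne_of_mem_sphere hz hR.ne'))
  have hfc : ContinuousOn f (sphere c R) := hf.continuousOn.mono sphere_subset_closedBall
  have h₁ : CircleIntegrable (fun z ↦ ((z - c) ^ n)⁻¹ * f z) c R :=
    (hcont.mul hfc).circleIntegrable hR.le
  have h₂ : CircleIntegrable (fun z ↦ ((z - c) ^ n)⁻¹ * conj (f z)) c R :=
    (hcont.mul (continuous_conj.comp_continuousOn hfc)).circleIntegrable hR.le
  have h := circleAverage_fun_add h₁ h₂
  rw [hf.circleAverage_inv_pow_mul_eq_coeff hR, hf.circleAverage_inv_pow_mul_conj_eq_zero hR hn,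
    add_zero] at h
  rw [← h]
  congr 1
  ext z
  rw [← mul_add, add_conj]

theorem circleAverage_re_eq (hf : DifferentiableOn ℂ f (closedBall c R)) (hR : 0 < R) :
    circleAverage (fun z ↦ (f z).re) c R = (f c).re := by
  have hint : CircleIntegrable f c R :=
    (hf.continuousOn.mono sphere_subset_closedBall).circleIntegrable hR.le
  rw [← abs_of_pos hR] at hf
  have h := reCLM.circleAverage_comp_comm hint
  rwa [(hf.mono closure_ball_subset_closedBall).diffContOnCl.circleAverage] at h

theorem norm_iteratedDeriv_div_factorial_mul_pow_le (hf : DifferentiableOn ℂ f (closedBall c R))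
    (hR : 0 < R) (hre : ∀ z ∈ sphere c R, 0 ≤ (f z).re) {n : ℕ} (hn : n ≠ 0) :
    ‖iteratedDeriv n f c / n.factorial‖ * R ^ n ≤ 2 * (f c).re := by
  have hnorm : EqOn (fun z ↦ ‖((z - c) ^ n)⁻¹ * (2 * (f z).re : ℝ)‖)
      (fun z ↦ (2 * (R ^ n)⁻¹) • (f z).re) (sphere c |R|) := by
    intro z hz
    have hz' : ‖z - c‖ = R := by simpa [abs_of_pos hR, dist_eq_norm] using hz
    rw [abs_of_pos hR] at hz
    simp [hz', abs_of_nonneg (hre z hz)]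
    ring
  have hRn : 0 < R ^ n := pow_pos hR n
  rw [← le_div_iff₀ hRn, ← hf.circleAverage_inv_pow_mul_two_mul_re_eq_coeff hR hn]
  calc _ ≤ _ := norm_circleAverage_le_circleAverage_norm _ c R
    _ = 2 * (R ^ n)⁻¹ * (f c).re := by
      rw [circleAverage_congr_sphere hnorm, circleAverage_fun_smul, hf.circleAverage_re_eq hR,
        smul_eq_mul]
    _ = 2 * (f c).re / R ^ n := by ring

end DifferentiableOn

theorem caratheodory_coeff_bound (f : ℂ → ℂ)
    (hf : DifferentiableOn ℂ f (ball 0 1)) (h0 : f 0 = 1)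
    (hre : ∀ z ∈ ball (0 : ℂ) 1, 0 < (f z).re) :
    ∀ n : ℕ, 1 ≤ n → ‖iteratedDeriv n f 0 / (n.factorial : ℂ)‖ ≤ 2 := by
  intro n hn
  set a := ‖iteratedDeriv n f 0 / (n.factorial : ℂ)‖
  have hbound : Ioo (0 : ℝ) 1 ⊆ {r | a * r ^ n ≤ 2} := fun r ⟨hr0, hr1⟩ ↦ by
    have hsub : closedBall (0 : ℂ) r ⊆ ball 0 1 := closedBall_subset_ball hr1
    have h := (hf.mono hsub).norm_iteratedDeriv_div_factorial_mul_pow_le hr0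
      (fun z hz ↦ (hre z (hsub (sphere_subset_closedBall hz))).le) (Nat.one_le_iff_ne_zero.mp hn)
    rwa [h0, one_re, mul_one] at h
  have hclosed : IsClosed {r : ℝ | a * r ^ n ≤ 2} := isClosed_le (by fun_prop) continuous_const
  rw [← hclosed.closure_subset_iff, closure_Ioo zero_ne_one] at hbound
  simpa using hbound (right_mem_Icc.mpr zero_le_one)
end

section
/- Let f : 𝔻 → ℂ be holomorphic with f(0) = 1 and Re f > 0 on 𝔻. If Re f(z₀) = (1 - |z₀|)/(1 + |z₀|) for some z₀ ≠ 0 in 𝔻, then there exists θ ∈ ℝ such that f(z) = (1 + e^{iθ} z)/(1 - e^{iθ} z) for all z ∈ 𝔻. -/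
/-!
Compose `f` with the Cayley transform: `g = (f - 1) / (f + 1)` maps the disc to itself with
`g 0 = 0`, so `‖g z₀‖ ≤ ‖z₀‖` by the Schwarz lemma, and `f = (1 + g) / (1 - g)`. On the closed
disc of radius `r < 1` the real part of `(1 + w) / (1 - w)` is smallest, namely `(1 - r) / (1 + r)`,
only at `w = -r`. Hence `g z₀ = -‖z₀‖`, the Schwarz bound is attained at `z₀`, and the equality
case of the Schwarz lemma makes `g` a rotation `z ↦ e^{iθ} z`.
-/

open Complex Metric Set

namespace Complex

lemma norm_sub_one_lt_norm_add_one_of_re_pos {w : ℂ} (hw : 0 < w.re) : ‖w - 1‖ < ‖w + 1‖ := by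
  have hsq : normSq (w - 1) < normSq (w + 1) := by
    simp only [normSq_apply, sub_re, sub_im, add_re, add_im, one_re, one_im]
    nlinarith
  rwa [← sq_lt_sq₀ (norm_nonneg _) (norm_nonneg _), Complex.sq_norm, Complex.sq_norm]

lemma add_one_ne_zero_of_re_pos {w : ℂ} (hw : 0 < w.re) : w + 1 ≠ 0 :=
  norm_pos_iff.1 ((norm_nonneg _).trans_lt (norm_sub_one_lt_norm_add_one_of_re_pos hw))

lemma norm_sub_one_div_add_one_lt_one_of_re_pos {w : ℂ} (hw : 0 < w.re) :
    ‖(w - 1) / (w + 1)‖ < 1 := by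
  rw [norm_div, div_lt_one (norm_pos_iff.2 (add_one_ne_zero_of_re_pos hw))]
  exact norm_sub_one_lt_norm_add_one_of_re_pos hw

lemma one_add_div_one_sub_of_sub_one_div_add_one {w : ℂ} (hw : w + 1 ≠ 0) :
    (1 + (w - 1) / (w + 1)) / (1 - (w - 1) / (w + 1)) = w := by
  rw [one_add_div hw, one_sub_div hw, div_div_div_cancel_right₀ hw]
  field_simp
  ring

/-- Equality case of the lower bound `(1 - r) / (1 + r) ≤ Re ((1 + w) / (1 - w))` for `‖w‖ ≤ r`. -/
lemma eq_neg_of_re_one_add_div_one_sub_eq {w : ℂ} {r : ℝ} (hw : ‖w‖ ≤ r) (hr : r < 1)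
    (h : ((1 + w) / (1 - w)).re = (1 - r) / (1 + r)) : w = -r := by
  have hr0 : 0 ≤ r := (norm_nonneg w).trans hw
  have hnorm : w.re ^ 2 + w.im ^ 2 ≤ r ^ 2 := by
    have := pow_le_pow_left₀ (norm_nonneg w) hw 2
    rwa [Complex.sq_norm, normSq_apply, ← sq, ← sq] at this
  have hre_lt : w.re < 1 := by nlinarith
  have hden : 0 < (1 - w.re) ^ 2 + w.im ^ 2 := by positivity
  have hre : ((1 + w) / (1 - w)).re = (1 - w.re ^ 2 - w.im ^ 2) / ((1 - w.re) ^ 2 + w.im ^ 2) := by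
    have hnormSq : normSq (1 - w) = (1 - w.re) ^ 2 + w.im ^ 2 := by
      simp only [normSq_apply, sub_re, sub_im, one_re, one_im]
      ring
    rw [div_re, hnormSq]
    simp only [add_re, add_im, sub_re, sub_im, one_re, one_im]
    field_simp
    ring
  rw [hre, div_eq_div_iff hden.ne' (by linarith)] at h
  have ha : w.re = -r := by nlinarith
  have hb : w.im = 0 := by nlinarith
  exact Complex.ext (by simp [ha]) (by simp [hb])

lemma exists_norm_eq_one_eqOn_mul_of_norm_eq {g : ℂ → ℂ} {R : ℝ} {z₀ : ℂ}
    (hd : DifferentiableOn ℂ g (ball 0 R)) (h_maps : MapsTo g (ball 0 R) (closedBall 0 R))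
    (h₀ : g 0 = 0) (hz₀ : z₀ ∈ ball 0 R) (hz₀0 : z₀ ≠ 0) (h_eq : ‖g z₀‖ = ‖z₀‖) :
    ∃ c : ℂ, ‖c‖ = 1 ∧ EqOn g (fun z => c * z) (ball 0 R) := by
  have hR : 0 < R := pos_of_mem_ball hz₀
  obtain ⟨c, hc, hgc⟩ := affine_of_mapsTo_ball_of_exists_norm_dslope_eq_div' (R₂ := R) hd
    (by rwa [h₀])
    ⟨z₀, hz₀, by rw [dslope_of_ne _ hz₀0, slope_def_field, h₀, div_self hR.ne']; simp [h_eq, hz₀0]⟩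
  rw [div_self hR.ne'] at hc
  exact ⟨c, hc, fun z hz => by simp [hgc hz, h₀, mul_comm]⟩

end Complex

theorem caratheodory_equality_case_re (f : ℂ → ℂ)
    (hf : DifferentiableOn ℂ f (ball 0 1)) (h0 : f 0 = 1)
    (hre : ∀ z ∈ ball (0 : ℂ) 1, 0 < (f z).re)
    (z₀ : ℂ) (hz₀ : z₀ ∈ ball (0 : ℂ) 1) (hz₀0 : z₀ ≠ 0)
    (heq : (f z₀).re = (1 - ‖z₀‖) / (1 + ‖z₀‖)) :
    ∃ θ : ℝ, ∀ z ∈ ball (0 : ℂ) 1,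
      f z = (1 + Complex.exp (θ * Complex.I) * z) / (1 - Complex.exp (θ * Complex.I) * z) := by
  set g : ℂ → ℂ := fun z => (f z - 1) / (f z + 1)
  have hden : ∀ z ∈ ball (0 : ℂ) 1, f z + 1 ≠ 0 := fun z hz => add_one_ne_zero_of_re_pos (hre z hz)
  have hg : DifferentiableOn ℂ g (ball 0 1) := (hf.sub_const 1).div (hf.add_const 1) hden
  have hmaps : MapsTo g (ball 0 1) (closedBall 0 1) := fun z hz =>
    mem_closedBall_zero_iff.2 (norm_sub_one_div_add_one_lt_one_of_re_pos (hre z hz)).le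
  have hg0 : g 0 = 0 := by simp [g, h0]
  have hfg : ∀ z ∈ ball (0 : ℂ) 1, f z = (1 + g z) / (1 - g z) := fun z hz =>
    (one_add_div_one_sub_of_sub_one_div_add_one (hden z hz)).symm
  have hr : ‖z₀‖ < 1 := mem_ball_zero_iff.1 hz₀
  have hgz₀ : g z₀ = -‖z₀‖ := eq_neg_of_re_one_add_div_one_sub_eq
    (norm_le_norm_of_mapsTo_ball hg hmaps hg0 hr) hr (by rw [← hfg z₀ hz₀, heq])
  obtain ⟨c, hc, hgc⟩ :=
    exists_norm_eq_one_eqOn_mul_of_norm_eq hg hmaps hg0 hz₀ hz₀0 (by simp [hgz₀])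
  obtain ⟨θ, rfl⟩ := (norm_eq_one_iff c).1 hc
  exact ⟨θ, fun z hz => by rw [hfg z hz, hgc hz]⟩
end

section
/- Let f : 𝔻 → ℂ be holomorphic and set A = sup_{z ∈ 𝔻} Re f(z) < ∞. Then for every 0 ≤ r < 1 and |z| ≤ r, Re f(z) ≤ (2r/(1+r))·A + ((1-r)/(1+r))·Re f(0). -/
open Complex Metric

/-!
Borel–Carathéodory. After subtracting `f 0` we may assume `f 0 = 0` and `Re f ≤ B` with `B ≥ 0`.
For `B > 0` the map `φ = f / (2B - f)` sends the disc into the closed disc and fixes `0`, so Schwarz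
gives `‖φ z‖ ≤ ‖z‖ ≤ r`; since `φ / (1 + φ) = f / (2B)`, the bound on `Re f z` comes from the image
of the disc `‖w‖ ≤ r` under `w ↦ w / (1 + w)`, whose real part is at most `r / (1 + r)`.
-/

namespace Complex

theorem re_div_one_add_le {w : ℂ} {r : ℝ} (hr : r < 1) (hw : ‖w‖ ≤ r) :
    (w / (1 + w)).re ≤ r / (1 + r) := by
  have hre : w.re ≤ ‖w‖ := re_le_norm w
  have hre' : -‖w‖ ≤ w.re := neg_le_of_abs_le (abs_re_le_norm w)
  have hnorm : w.re ^ 2 + w.im ^ 2 = ‖w‖ ^ 2 := by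
    rw [Complex.sq_norm, normSq_apply]; ring
  have hden : normSq (1 + w) = 1 + 2 * w.re + ‖w‖ ^ 2 := by
    rw [normSq_apply]; simp only [add_re, add_im, one_re, one_im]; nlinarith
  have hden_pos : 0 < normSq (1 + w) := by
    rw [hden]; nlinarith [norm_nonneg w]
  have hquot : (w / (1 + w)).re = (w.re + ‖w‖ ^ 2) / normSq (1 + w) := by
    rw [div_re, ← hnorm]
    simp only [add_re, add_im, one_re, one_im, zero_add]
    field_simp
    ring
  rw [hquot, div_le_div_iff₀ hden_pos (by linarith [norm_nonneg w]), hden]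
  -- reduces to `Re w (1 - r) + ‖w‖² ≤ r`, and `‖w‖ (1 - r + ‖w‖) - r = (‖w‖ - r)(1 + ‖w‖) ≤ 0`
  nlinarith [norm_nonneg w]

theorem norm_le_norm_two_mul_sub_of_re_le {B : ℝ} (hB : 0 ≤ B) {w : ℂ} (hw : w.re ≤ B) :
    ‖w‖ ≤ ‖2 * (B : ℂ) - w‖ := by
  rw [← pow_le_pow_iff_left₀ (norm_nonneg _) (norm_nonneg _) two_ne_zero, Complex.sq_norm,
    Complex.sq_norm, normSq_apply, normSq_apply]
  simp only [sub_re, sub_im, mul_re, mul_im, ofReal_re, ofReal_im, re_ofNat, im_ofNat]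
  nlinarith

theorem re_le_of_re_le_of_map_zero {g : ℂ → ℂ} (hg : DifferentiableOn ℂ g (ball 0 1))
    (hg₀ : g 0 = 0) {B : ℝ} (hB : ∀ w ∈ ball (0 : ℂ) 1, (g w).re ≤ B) {r : ℝ} (hr : r < 1)
    {z : ℂ} (hz : ‖z‖ ≤ r) : (g z).re ≤ 2 * r / (1 + r) * B := by
  have hz₁ : z ∈ ball (0 : ℂ) 1 := mem_ball_zero_iff.mpr (hz.trans_lt hr)
  have hB₀ : 0 ≤ B := by simpa [hg₀] using hB 0 (mem_ball_self one_pos)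
  rcases hB₀.eq_or_lt with rfl | hB_pos
  · simpa using hB z hz₁
  have hden : ∀ w ∈ ball (0 : ℂ) 1, 2 * (B : ℂ) - g w ≠ 0 := fun w hw h => by
    have hre_zero := congrArg re h
    simp only [sub_re, mul_re, ofReal_re, ofReal_im, re_ofNat, im_ofNat, zero_re] at hre_zero
    linarith [hB w hw]
  set φ : ℂ → ℂ := fun w => g w / (2 * B - g w)
  have hφ_diff : DifferentiableOn ℂ φ (ball 0 1) :=
    hg.div ((differentiableOn_const _).sub hg) hden
  have hφ_maps : Set.MapsTo φ (ball 0 1) (closedBall 0 1) := fun w hw => by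
    rw [mem_closedBall_zero_iff, norm_div]
    exact div_le_one_of_le₀ (norm_le_norm_two_mul_sub_of_re_le hB₀ (hB w hw)) (norm_nonneg _)
  have hφz : ‖φ z‖ ≤ r :=
    (norm_le_norm_of_mapsTo_ball hφ_diff hφ_maps (by simp [φ, hg₀])
      (mem_ball_zero_iff.mp hz₁)).trans hz
  have hφ_quot : φ z / (1 + φ z) = g z / ((2 * B : ℝ) : ℂ) := by
    have hdz := hden z hz₁
    have hB_ne : (B : ℂ) ≠ 0 := ofReal_ne_zero.mpr hB_pos.ne'
    simp only [φ]
    push_cast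
    field_simp
    ring
  have hre : (g z).re / (2 * B) ≤ r / (1 + r) := by
    simpa only [hφ_quot, div_ofReal_re] using re_div_one_add_le hr hφz
  rw [div_le_iff₀ (by positivity)] at hre
  calc (g z).re ≤ r / (1 + r) * (2 * B) := hre
    _ = 2 * r / (1 + r) * B := by ring

end Complex

theorem borel_caratheodory_re_bound (f : ℂ → ℂ)
    (hf : DifferentiableOn ℂ f (ball 0 1)) (A : ℝ)
    (hA : IsLUB ((fun z => (f z).re) '' ball (0 : ℂ) 1) A) :
    ∀ r : ℝ, 0 ≤ r → r < 1 → ∀ z : ℂ, ‖z‖ ≤ r →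
      (f z).re ≤ 2 * r / (1 + r) * A + (1 - r) / (1 + r) * (f 0).re := by
  intro r _ hr z hz
  have hbound := Complex.re_le_of_re_le_of_map_zero (g := fun w => f w - f 0)
    (hf.sub (differentiableOn_const _)) (sub_self _) (B := A - (f 0).re)
    (fun w hw => by simpa using hA.1 ⟨w, hw, rfl⟩) hr hz
  have hr₀ : 0 < 1 + r := by linarith [(norm_nonneg z).trans hz]
  have hsplit : 2 * r / (1 + r) * A + (1 - r) / (1 + r) * (f 0).re
      = (f 0).re + 2 * r / (1 + r) * (A - (f 0).re) := by
    field_simp; ring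
  simp only [sub_re] at hbound
  linarith
end

section
/- Let f : 𝔻 → ℂ be holomorphic with f(0) = 1 and Re f > 0 on 𝔻, and fix n₀ ≥ 1. Then the function φ(w) = ∑_{m≥0} a_{m n₀} w^m (where aₙ are the Taylor coefficients of f, a₀ = 1) is holomorphic on 𝔻, satisfies φ(0) = 1, and Re φ(w) > 0 for all w ∈ 𝔻. -/
/-!
Let ζ be a primitive n₀-th root of unity. Averaging the Taylor series of f over the rotations
z ↦ ζᵏ z kills every coefficient whose index is not a multiple of n₀, since
∑ₖ ζ^(jk) vanishes unless n₀ ∣ j; hence φ(z^n₀) = (1/n₀) ∑ₖ f(ζᵏ z). So φ is a mean of values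
of f, which gives φ(0) = f(0) = 1 and Re φ > 0. Every w ∈ 𝔻 is some z^n₀ with z ∈ 𝔻, so the
extracted series converges on 𝔻 and φ is holomorphic there as the sum of a power series.
-/

open Complex Metric Finset

section RootsOfUnityFilter

variable {K : Type*} [Field K] {ζ : K} {n : ℕ}

theorem IsPrimitiveRoot.geom_sum_pow_eq_ite (hζ : IsPrimitiveRoot ζ n) (j : ℕ) :
    ∑ k ∈ range n, (ζ ^ j) ^ k = if n ∣ j then (n : K) else 0 := by
  split_ifs with h
  · simp [(hζ.pow_eq_one_iff_dvd j).mpr h]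
  · rw [geom_sum_eq (mt (hζ.pow_eq_one_iff_dvd j).mp h), ← pow_mul, mul_comm, pow_mul,
      hζ.pow_eq_one, one_pow, sub_self, zero_div]

variable [TopologicalSpace K] [IsTopologicalRing K]

theorem IsPrimitiveRoot.hasSum_sum_rotations (hζ : IsPrimitiveRoot ζ n) (hn : n ≠ 0)
    {c : ℕ → K} {z : K} {s : ℕ → K}
    (hs : ∀ k ∈ range n, HasSum (fun j => c j * (ζ ^ k * z) ^ j) (s k)) :
    HasSum (fun m => n * (c (m * n) * (z ^ n) ^ m)) (∑ k ∈ range n, s k) := by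
  have hfilter : HasSum (fun j => c j * z ^ j * if n ∣ j then (n : K) else 0)
      (∑ k ∈ range n, s k) := by
    convert hasSum_sum hs using 1
    funext j
    rw [← hζ.geom_sum_pow_eq_ite j, mul_sum]
    exact sum_congr rfl fun k _ => by ring
  have hsupp : ∀ j ∉ Set.range (· * n), c j * z ^ j * (if n ∣ j then (n : K) else 0) = 0 := by
    intro j hj
    rw [if_neg fun ⟨m, hm⟩ => hj ⟨m, by rw [hm, mul_comm]⟩, mul_zero]
  rw [← (mul_left_injective₀ hn).hasSum_iff hsupp] at hfilter
  convert hfilter using 2 with m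
  simp [← pow_mul', mul_comm]

end RootsOfUnityFilter

theorem Summable.powerSeries_comp_mul {R : Type*} [Ring R] [UniformSpace R] [IsUniformAddGroup R]
    [CompleteSpace R] {c : ℕ → R} {z : R} (h : Summable fun j => c j * z ^ j) {n : ℕ}
    (hn : n ≠ 0) : Summable fun m => c (m * n) * (z ^ n) ^ m := by
  simpa only [Function.comp_def, ← pow_mul'] using h.comp_injective (mul_left_injective₀ hn)

theorem differentiableOn_tsum_mul_pow {c : ℕ → ℂ} {R : ℝ}
    (h : ∀ w ∈ ball (0 : ℂ) R, Summable fun m => c m * w ^ m) :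
    DifferentiableOn ℂ (fun w => ∑' m, c m * w ^ m) (ball 0 R) := by
  rcases le_or_gt R 0 with hR | hR
  · simpa [ball_eq_empty.mpr hR] using differentiableOn_empty
  set p := FormalMultilinearSeries.ofScalars ℂ c
  have hradius : ENNReal.ofReal R ≤ p.radius := by
    refine ENNReal.le_of_forall_nnreal_lt fun r hr => p.le_radius_of_tendsto (l := 0) ?_
    have hrR : (r : ℝ) < R := by
      simpa using (ENNReal.lt_ofReal_iff_toReal_lt ENNReal.coe_ne_top).mp hr
    have := (h r (by simpa using hrR)).tendsto_atTop_zero.norm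
    simpa [p, FormalMultilinearSeries.ofScalars_norm] using this
  have hsum : (fun w => ∑' m, c m * w ^ m) = FormalMultilinearSeries.ofScalarsSum c := by
    simp [FormalMultilinearSeries.ofScalarsSum_eq_tsum]
  rw [hsum]
  refine ((p.hasFPowerSeriesOnBall ?_).differentiableOn).mono ?_
  · exact lt_of_lt_of_le (ENNReal.ofReal_pos.mpr hR) hradius
  · rw [← Metric.eball_ofReal]
    exact Metric.eball_subset_eball hradius

theorem exists_pow_eq_of_mem_ball_one {n : ℕ} (hn : n ≠ 0) {w : ℂ} (hw : w ∈ ball (0 : ℂ) 1) :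
    ∃ z ∈ ball (0 : ℂ) 1, z ^ n = w := by
  obtain ⟨z, rfl⟩ := IsAlgClosed.exists_pow_nat_eq w (Nat.pos_of_ne_zero hn)
  refine ⟨z, ?_, rfl⟩
  rw [mem_ball_zero_iff, norm_pow] at *
  exact (pow_lt_one_iff_of_nonneg (norm_nonneg z) hn).mp hw

theorem coeff_extraction_positive_re (f : ℂ → ℂ)
    (hf : DifferentiableOn ℂ f (ball 0 1)) (h0 : f 0 = 1)
    (hre : ∀ z ∈ ball (0 : ℂ) 1, 0 < (f z).re)
    (a : ℕ → ℂ) (ha : ∀ n, a n = iteratedDeriv n f 0 / (n.factorial : ℂ))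
    (n₀ : ℕ) (hn₀ : 1 ≤ n₀)
    (φ : ℂ → ℂ) (hφ : ∀ w, φ w = ∑' m : ℕ, a (m * n₀) * w ^ m) :
    DifferentiableOn ℂ φ (ball 0 1) ∧ φ 0 = 1 ∧
    ∀ w ∈ ball (0 : ℂ) 1, 0 < (φ w).re := by
  have hn : n₀ ≠ 0 := Nat.one_le_iff_ne_zero.mp hn₀
  have hf_sum : ∀ z ∈ ball (0 : ℂ) 1, HasSum (fun n => a n * z ^ n) (f z) := fun z hz => by
    simpa [ha, div_eq_inv_mul, mul_comm, mul_left_comm] using hasSum_taylorSeries_on_ball hf hz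
  have hφ_sum : ∀ w ∈ ball (0 : ℂ) 1, HasSum (fun m => a (m * n₀) * w ^ m) (φ w) := by
    intro w hw
    obtain ⟨z, hz, rfl⟩ := exists_pow_eq_of_mem_ball_one hn hw
    rw [hφ]
    exact ((hf_sum z hz).summable.powerSeries_comp_mul hn).hasSum
  set ζ := exp (2 * Real.pi * I / n₀)
  have hζ : IsPrimitiveRoot ζ n₀ := isPrimitiveRoot_exp n₀ hn
  have hrot : ∀ z ∈ ball (0 : ℂ) 1, ∀ k : ℕ, ζ ^ k * z ∈ ball (0 : ℂ) 1 := fun z hz k => by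
    simpa [hζ.norm'_eq_one hn] using hz
  have hmean : ∀ z ∈ ball (0 : ℂ) 1, φ (z ^ n₀) = (∑ k ∈ range n₀, f (ζ ^ k * z)) / n₀ := by
    intro z hz
    have hzn : z ^ n₀ ∈ ball (0 : ℂ) 1 := by
      simpa using pow_lt_one₀ (norm_nonneg z) (mem_ball_zero_iff.mp hz) hn
    rw [eq_div_iff (Nat.cast_ne_zero.mpr hn), mul_comm]
    exact ((hφ_sum _ hzn).mul_left (n₀ : ℂ)).unique
      (hζ.hasSum_sum_rotations hn fun k _ => hf_sum _ (hrot z hz k))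
  refine ⟨?_, ?_, fun w hw => ?_⟩
  · rw [show φ = _ from funext hφ]
    exact differentiableOn_tsum_mul_pow fun w hw => (hφ_sum w hw).summable
  · simpa [h0, hn] using hmean 0 (mem_ball_self one_pos)
  · obtain ⟨z, hz, rfl⟩ := exists_pow_eq_of_mem_ball_one hn hw
    rw [hmean z hz, div_natCast_re, re_sum]
    exact div_pos (sum_pos (fun k _ => hre _ (hrot z hz k)) (nonempty_range_iff.mpr hn))
      (Nat.cast_pos.mpr (Nat.pos_of_ne_zero hn))
end

section
/- Let f : 𝔻 → ℂ be holomorphic with f(0) = 0 and Re f(z) < A on 𝔻 for some A > 0. Then for every z ∈ 𝔻, Re f(z) ≤ 2A·|z|/(1 + |z|). -/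
/-!
Since `Re f < A`, the point `f z` is strictly closer to `0` than to `2A`, so the Cayley-type
quotient `g = f / (2A - f)` maps the disc into itself and vanishes at `0`. Schwarz's lemma gives
`‖f z‖ ≤ ‖z‖ ‖2A - f z‖`, and comparing real parts yields `Re f z ≤ ‖z‖ (2A - Re f z)`.
-/

open Complex Metric

namespace Complex

lemma norm_lt_norm_ofReal_sub_of_two_mul_re_lt {w : ℂ} {a : ℝ} (ha : 0 < a) (h : 2 * w.re < a) :
    ‖w‖ < ‖(a : ℂ) - w‖ := by
  have hsq : ‖w‖ ^ 2 < ‖(a : ℂ) - w‖ ^ 2 := by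
    simp only [Complex.sq_norm, normSq_apply, sub_re, sub_im, ofReal_re, ofReal_im]
    nlinarith
  exact lt_of_pow_lt_pow_left₀ 2 (norm_nonneg _) hsq

lemma re_mul_one_add_le_of_norm_le_mul_norm_sub {w : ℂ} {a r : ℝ} (hr₀ : 0 ≤ r) (hr₁ : r ≤ 1)
    (hw : w.re ≤ a) (h : ‖w‖ ≤ r * ‖(a : ℂ) - w‖) : w.re * (1 + r) ≤ a * r := by
  have hsq : w.re ^ 2 + w.im ^ 2 ≤ r ^ 2 * ((a - w.re) ^ 2 + w.im ^ 2) := by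
    have := pow_le_pow_left₀ (norm_nonneg _) h 2
    simp only [mul_pow, Complex.sq_norm, normSq_apply, sub_re, sub_im, ofReal_re, ofReal_im] at this
    linear_combination this
  -- `r ≤ 1` lets the imaginary parts be dropped
  have hre_sq : w.re ^ 2 ≤ (r * (a - w.re)) ^ 2 := by
    nlinarith [mul_le_mul_of_nonneg_right (pow_le_one₀ hr₀ hr₁ : r ^ 2 ≤ 1) (sq_nonneg w.im)]
  linarith [(abs_le_of_sq_le_sq' hre_sq (mul_nonneg hr₀ (sub_nonneg.2 hw))).2]

/-- Schwarz's lemma applied to `f / (a - f)`. -/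
lemma norm_le_norm_mul_norm_ofReal_sub_of_two_mul_re_lt {f : ℂ → ℂ} {a : ℝ}
    (hf : DifferentiableOn ℂ f (ball 0 1)) (h₀ : f 0 = 0)
    (hre : ∀ z ∈ ball (0 : ℂ) 1, 2 * (f z).re < a) {z : ℂ} (hz : z ∈ ball (0 : ℂ) 1) :
    ‖f z‖ ≤ ‖z‖ * ‖(a : ℂ) - f z‖ := by
  have ha : 0 < a := by simpa [h₀] using hre 0 (mem_ball_self one_pos)
  have hlt : ∀ z ∈ ball (0 : ℂ) 1, ‖f z‖ < ‖(a : ℂ) - f z‖ := fun z hz ↦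
    norm_lt_norm_ofReal_sub_of_two_mul_re_lt ha (hre z hz)
  have hden : ∀ z ∈ ball (0 : ℂ) 1, (a : ℂ) - f z ≠ 0 := fun z hz ↦
    norm_pos_iff.1 ((norm_nonneg _).trans_lt (hlt z hz))
  have hmaps : Set.MapsTo (fun z ↦ f z / (a - f z)) (ball 0 1) (closedBall 0 1) := by
    intro z hz
    rw [mem_closedBall_zero_iff, norm_div, div_le_one (norm_pos_iff.2 (hden z hz))]
    exact (hlt z hz).le
  have hschwarz : ‖f z / (a - f z)‖ ≤ ‖z‖ :=
    norm_le_norm_of_mapsTo_ball (hf.div ((differentiableOn_const _).sub hf) hden) hmaps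
      (by simp [h₀]) (mem_ball_zero_iff.1 hz)
  rwa [norm_div, div_le_iff₀ (norm_pos_iff.2 (hden z hz))] at hschwarz

end Complex

theorem borel_caratheodory_re_pointwise_general (f : ℂ → ℂ)
    (hf : DifferentiableOn ℂ f (ball 0 1)) (h0 : f 0 = 0)
    (A : ℝ)
    (hre : ∀ z ∈ ball (0 : ℂ) 1, (f z).re < A) :
    ∀ z ∈ ball (0 : ℂ) 1,
      (f z).re ≤ 2 * A * ‖z‖ / (1 + ‖z‖) := by
  have hA : 0 < A := by simpa [h0] using hre 0 (mem_ball_self one_pos)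
  intro z hz
  have hz₁ : ‖z‖ ≤ 1 := (mem_ball_zero_iff.1 hz).le
  have hbound := norm_le_norm_mul_norm_ofReal_sub_of_two_mul_re_lt (a := 2 * A) hf h0
    (fun z hz ↦ by linarith [hre z hz]) hz
  rw [le_div_iff₀ (by positivity)]
  exact re_mul_one_add_le_of_norm_le_mul_norm_sub (norm_nonneg z) hz₁
    (by linarith [hre z hz]) hbound

theorem borel_caratheodory_re_pointwise (f : ℂ → ℂ)
    (hf : DifferentiableOn ℂ f (ball 0 1)) (h0 : f 0 = 0)
    (A : ℝ) (hApos : 0 < A)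
    (hre : ∀ z ∈ ball (0 : ℂ) 1, (f z).re < A) :
    ∀ z ∈ ball (0 : ℂ) 1,
      (f z).re ≤ 2 * A * ‖z‖ / (1 + ‖z‖) :=
  borel_caratheodory_re_pointwise_general f hf h0 A hre
end
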